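/- For every s > 0 and x ∈ ℝ, the Laplace transform in time of φ(t,x) := (2√t)^{−1}·1{|x| ≤ √t} is given explicitly by s·∫₀^∞ e^{−st}·φ(t,x) dt = √(sπ)·(1 − F(√(2s)·|x|)), where F is the standard normal cumulative distribution function. In particular, x ↦ √(sπ)·(1 − F(√(2s)·|x|)) is a probability density on ℝ: ∫_{−∞}^∞ √(sπ)·(1 − F(√(2s)·|x|)) dx = 1. -/

import Mathlib

open MeasureTheory

noncomputable section

/-- The standard normal cumulative distribution function `F`. -/
def stdNormalCdf (x : ℝ) : ℝ :=
  (Real.sqrt (2 * Real.pi))⁻¹ * ∫ y in Set.Iic x, Real.exp (-(y ^ 2) / 2)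

/-- `φ̂(s,x) = √(sπ) (1 - F(√(2s)|x|))`. -/
def phiHat (s x : ℝ) : ℝ :=
  Real.sqrt (s * Real.pi) * (1 - stdNormalCdf (Real.sqrt (2 * s) * |x|))

/-- The candidate scaling-limit density `φ(t,x) = (2√t)⁻¹ 1{|x| ≤ √t}`,
the density of the uniform distribution on `(-√t, √t)`. -/
def phiDens (t x : ℝ) : ℝ :=
  (2 * Real.sqrt t)⁻¹ * if |x| ≤ Real.sqrt t then 1 else 0

open Set Real

/-! Substituting `t = u²` turns the Laplace transform of `φ(·, x)` into the Gaussian tail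
`∫_{|x|}^∞ e^{-su²} du`, which the linear change of variables `y = √(2s) u` identifies with
`(1 - F(√(2s)|x|)) √π / √s`. Integrating the tail over `x` and exchanging the order of
integration gives `2 ∫_0^∞ u e^{-su²} du = 1/s`. -/

theorem integral_Ioi_comp_sq {E : Type*} [NormedAddCommGroup E] [NormedSpace ℝ E]
    (g : ℝ → E) {c : ℝ} (hc : 0 ≤ c) :
    ∫ u in Ioi c, (2 * u) • g (u ^ 2) = ∫ t in Ioi (c ^ 2), g t := by
  have h := integral_comp_rpow_Ioi_of_pos' (g := g) two_pos (sq_nonneg c)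
  have hc' : (c ^ 2) ^ (2⁻¹ : ℝ) = c := by
    simpa using Real.pow_rpow_inv_natCast hc two_ne_zero
  rw [hc'] at h
  rw [← h]
  refine setIntegral_congr_fun measurableSet_Ioi fun u _ => ?_
  norm_num

theorem integral_exp_mul_phiDens (s x : ℝ) :
    ∫ t in Ioi 0, exp (-s * t) * phiDens t x = ∫ u in Ioi |x|, exp (-s * u ^ 2) := by
  have hvanish : ∀ t ∈ Ici 0 \ Ici (x ^ 2), exp (-s * t) * phiDens t x = 0 := by
    rintro t ⟨ht0, htx⟩
    have : ¬ |x| ≤ √t := by rwa [Real.le_sqrt (abs_nonneg x) ht0, sq_abs]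
    simp [phiDens, this]
  rw [← integral_Ici_eq_integral_Ioi, setIntegral_eq_of_subset_of_forall_sdiff_eq_zero
    measurableSet_Ici (Ici_subset_Ici.2 (sq_nonneg x)) hvanish, integral_Ici_eq_integral_Ioi,
    ← sq_abs, ← integral_Ioi_comp_sq _ (abs_nonneg x)]
  refine setIntegral_congr_fun measurableSet_Ioi fun u hu => ?_
  have hu0 : 0 < u := (abs_nonneg x).trans_lt hu
  simp [phiDens, Real.sqrt_sq hu0.le, (mem_Ioi.1 hu).le]
  field_simp

theorem one_sub_stdNormalCdf (a : ℝ) :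
    1 - stdNormalCdf a = (√(2 * π))⁻¹ * ∫ y in Ioi a, exp (-(y ^ 2) / 2) := by
  have hint : Integrable fun y : ℝ => exp (-(y ^ 2) / 2) := by
    simpa [neg_div, div_eq_inv_mul] using integrable_exp_neg_mul_sq (b := 2⁻¹) (by norm_num)
  have htotal : ∫ y, exp (-(y ^ 2) / 2) = √(2 * π) := by
    simpa [neg_div, div_eq_inv_mul] using integral_gaussian (2⁻¹)
  have hsplit := integral_add_compl (measurableSet_Iic (a := a)) hint
  rw [compl_Iic, htotal] at hsplit
  have hnorm : (√(2 * π))⁻¹ * √(2 * π) = 1 := inv_mul_cancel₀ (by positivity)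
  rw [stdNormalCdf]
  linear_combination (-(√(2 * π))⁻¹) * hsplit - hnorm

theorem integral_Ioi_exp_neg_mul_sq_eq {s : ℝ} (hs : 0 < s) (r : ℝ) :
    ∫ u in Ioi r, exp (-s * u ^ 2)
      = (√(2 * s))⁻¹ * ∫ y in Ioi (√(2 * s) * r), exp (-(y ^ 2) / 2) := by
  rw [← smul_eq_mul, ← integral_comp_mul_left_Ioi _ _ (by positivity)]
  refine setIntegral_congr_fun measurableSet_Ioi fun u _ => ?_
  rw [mul_pow, Real.sq_sqrt (by positivity)]
  ring_nf

theorem phiHat_eq_mul_integral_Ioi {s : ℝ} (hs : 0 < s) (x : ℝ) :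
    phiHat s x = s * ∫ u in Ioi |x|, exp (-s * u ^ 2) := by
  rw [phiHat, one_sub_stdNormalCdf, integral_Ioi_exp_neg_mul_sq_eq hs]
  have : √(s * π) * (√(2 * π))⁻¹ = s * (√(2 * s))⁻¹ := by
    rw [← Real.sqrt_inv, ← Real.sqrt_inv, ← Real.sqrt_mul (by positivity),
      show s * π * (2 * π)⁻¹ = s ^ 2 * (2 * s)⁻¹ by field_simp,
      Real.sqrt_mul (by positivity), Real.sqrt_sq hs.le]
  rw [← mul_assoc, this, mul_assoc]

theorem integral_Ioi_ite_lt (a : ℝ) {u : ℝ} (hu : 0 ≤ u) :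
    ∫ y in Ioi 0, (if y < u then a else 0) = u * a := by
  rw [setIntegral_eq_of_subset_of_forall_sdiff_eq_zero measurableSet_Ioi
    (Ioo_subset_Ioi_self : Ioo 0 u ⊆ Ioi 0) fun y hy => if_neg fun h => hy.2 ⟨hy.1, h⟩,
    setIntegral_congr_fun measurableSet_Ioo fun y hy => if_pos hy.2]
  simp [hu]

theorem integrableOn_Ioi_ite_lt (a u : ℝ) :
    IntegrableOn (fun y => if y < u then a else 0) (Ioi 0) := by
  have : (fun y => if y < u then a else 0) = (Iio u).indicator fun _ => a := by
    ext y; simp [indicator]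
  rw [this, IntegrableOn, integrable_indicator_iff measurableSet_Iio]
  exact integrableOn_const (by simp [Measure.restrict_apply measurableSet_Iio, Iio_inter_Ioi])

theorem integral_Ioi_integral_Ioi {f : ℝ → ℝ}
    (hf : AEStronglyMeasurable f (volume.restrict (Ioi 0)))
    (hxf : IntegrableOn (fun u => u * f u) (Ioi 0)) :
    ∫ y in Ioi 0, ∫ u in Ioi y, f u = ∫ u in Ioi 0, u * f u := by
  set F : ℝ → ℝ → ℝ := fun y u => if y < u then f u else 0
  have hinner : ∀ y ∈ Ioi (0:ℝ), ∫ u in Ioi y, f u = ∫ u in Ioi 0, F y u := by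
    intro y hy
    rw [setIntegral_eq_of_subset_of_forall_sdiff_eq_zero (f := F y) measurableSet_Ioi
      (Ioi_subset_Ioi (mem_Ioi.1 hy).le) fun u hu => if_neg hu.2]
    exact setIntegral_congr_fun measurableSet_Ioi fun u hu => (if_pos hu).symm
  have hmeas : AEStronglyMeasurable (Function.uncurry F)
      ((volume.restrict (Ioi 0)).prod (volume.restrict (Ioi 0))) := by
    have : Function.uncurry F = {p : ℝ × ℝ | p.1 < p.2}.indicator (fun p => f p.2) := by
      ext ⟨y, u⟩; simp [F, indicator]
    rw [this]
    exact hf.comp_snd.indicator (measurableSet_lt measurable_fst measurable_snd)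
  have hint : Integrable (Function.uncurry F)
      ((volume.restrict (Ioi 0)).prod (volume.restrict (Ioi 0))) := by
    refine (integrable_prod_iff' hmeas).2 ⟨Filter.Eventually.of_forall fun u =>
      integrableOn_Ioi_ite_lt (f u) u, ?_⟩
    refine hxf.norm.congr ?_
    filter_upwards [ae_restrict_mem measurableSet_Ioi] with u hu
    have : ∀ y, ‖F y u‖ = if y < u then ‖f u‖ else 0 := fun y => by
      simp only [F]; split_ifs <;> simp
    simp only [Function.uncurry_apply_pair, this, integral_Ioi_ite_lt _ (le_of_lt hu), norm_mul,
      Real.norm_of_nonneg (le_of_lt hu)]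
  rw [setIntegral_congr_fun measurableSet_Ioi hinner, integral_integral_swap hint,
    setIntegral_congr_fun measurableSet_Ioi fun u hu => integral_Ioi_ite_lt (f u) (le_of_lt hu)]

theorem integral_Ioi_mul_exp_neg_mul_sq {s : ℝ} (hs : 0 < s) :
    ∫ u in Ioi 0, u * exp (-s * u ^ 2) = 1 / (2 * s) := by
  have h := integral_Ioi_comp_sq (fun t => exp (-s * t)) le_rfl
  rw [zero_pow two_ne_zero, integral_exp_mul_Ioi (neg_lt_zero.2 hs)] at h
  simp only [smul_eq_mul, mul_assoc, integral_const_mul, mul_zero, exp_zero, neg_div_neg_eq] at h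
  rw [eq_div_iff (by positivity)]
  rw [eq_div_iff hs.ne'] at h
  linear_combination h

/-- the Laplace transform in time of `φ(t,x)` is
`s ∫₀^∞ e^{-st} φ(t,x) dt = √(sπ)(1 - F(√(2s)|x|)) = φ̂(s,x)`, and
`x ↦ φ̂(s,x)` is a probability density on `ℝ`. -/
theorem stmt_19 (s : ℝ) (hs : 0 < s) :
    (∀ x : ℝ,
      s * ∫ t in Set.Ioi (0 : ℝ), Real.exp (-s * t) * phiDens t x = phiHat s x) ∧
    ∫ x : ℝ, phiHat s x = 1 := by
  refine ⟨fun x => by rw [integral_exp_mul_phiDens, phiHat_eq_mul_integral_Ioi hs], ?_⟩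
  have hG := integral_Ioi_integral_Ioi (f := fun u => exp (-s * u ^ 2))
    (by fun_prop) (integrable_mul_exp_neg_mul_sq hs).integrableOn
  calc ∫ x, phiHat s x = ∫ x, s * ∫ u in Ioi |x|, exp (-s * u ^ 2) := by
        simp_rw [phiHat_eq_mul_integral_Ioi hs]
    _ = s * (2 * ∫ u in Ioi 0, u * exp (-s * u ^ 2)) := by
      rw [integral_const_mul,
        integral_comp_abs (f := fun r => ∫ u in Ioi r, exp (-s * u ^ 2)), hG]
    _ = 1 := by rw [integral_Ioi_mul_exp_neg_mul_sq hs]; field_simp
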